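/- arXiv:1301.5007 — 4 statements merged into one kernel-verified Lean document; each statement's English description precedes it below -/
import Mathlib

section
/- Let β > 0 and β' > β. Then ∫₀^∞ exp(a(e^{-βt} - 1) - β't) dt is asymptotically equivalent to 1/(aβ) as a → ∞, i.e. the ratio of the integral to 1/(aβ) tends to 1. -/
open MeasureTheory Filter

lemma aux_integral_exp_neg_mul_Ioi {c : ℝ} (hc : 0 < c) (T : ℝ) :
    ∫ t in Set.Ioi T, Real.exp (-(c * t)) = Real.exp (-(c * T)) / c := by
  have hderiv : ∀ t ∈ Set.Ici T,
      HasDerivAt (fun t => -(Real.exp (-(c * t)) / c)) (Real.exp (-(c * t))) t := by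
    intro t _
    have h1 : HasDerivAt (fun t : ℝ => -(c * t)) (-c) t := by
      exact ((hasDerivAt_id t).const_mul c).neg.congr_deriv (by ring)
    have h2 := (h1.exp.div_const c).neg
    exact h2.congr_deriv (by rw [mul_neg, neg_div, neg_neg, mul_div_assoc, div_self hc.ne', mul_one])
  have hint : IntegrableOn (fun t => Real.exp (-(c * t))) (Set.Ioi T) := by
    simpa only [neg_mul] using exp_neg_integrableOn_Ioi T hc
  have htend : Tendsto (fun t => -(Real.exp (-(c * t)) / c)) atTop (nhds 0) := by
    have : Tendsto (fun t : ℝ => -(c * t)) atTop atBot :=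
      tendsto_neg_atBot_iff.mpr ((tendsto_const_mul_atTop_of_pos hc).mpr tendsto_id)
    simpa using ((Real.tendsto_exp_atBot.comp this).div_const c).neg
  have := integral_Ioi_of_hasDerivAt_of_tendsto' hderiv hint htend
  rw [this]; ring

lemma aux_sqrt_atTop : Tendsto Real.sqrt atTop atTop :=
  tendsto_atTop_atTop_of_monotone (fun _ _ h => Real.sqrt_le_sqrt h)
    (fun b => ⟨(max b 0) ^ 2, by
      rw [Real.sqrt_sq (le_max_right b 0)]; exact le_max_left b 0⟩)

lemma aux_integrable (β β' a : ℝ) (hβ : 0 < β) (hβ' : 0 < β') (ha : 0 ≤ a) :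
    IntegrableOn (fun t => Real.exp (a * (Real.exp (-β * t) - 1) - β' * t))
      (Set.Ioi (0:ℝ)) := by
  apply Integrable.mono' (g := fun t => Real.exp (-(β' * t)))
  · simpa only [neg_mul, IntegrableOn] using exp_neg_integrableOn_Ioi 0 hβ'
  · exact (Real.continuous_exp.comp (by continuity)).aestronglyMeasurable
  · filter_upwards [ae_restrict_mem measurableSet_Ioi] with t ht
    rw [Real.norm_eq_abs, abs_of_pos (Real.exp_pos _), Real.exp_le_exp]
    have h1 : Real.exp (-β * t) ≤ 1 :=
      Real.exp_le_one_iff.mpr (by nlinarith [Set.mem_Ioi.mp ht])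
    nlinarith

lemma aux_lower (β β' a : ℝ) (hβ : 0 < β) (hβ' : 0 < β') (ha : 0 ≤ a) :
    1 / (a * β + β') ≤
      ∫ t in Set.Ioi (0:ℝ), Real.exp (a * (Real.exp (-β * t) - 1) - β' * t) := by
  have hc : 0 < a * β + β' := by nlinarith
  have key := aux_integral_exp_neg_mul_Ioi hc 0
  rw [mul_zero, neg_zero, Real.exp_zero] at key
  rw [← key]
  apply setIntegral_mono_on
  · simpa only [neg_mul] using exp_neg_integrableOn_Ioi 0 hc
  · exact aux_integrable β β' a hβ hβ' ha
  · exact measurableSet_Ioi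
  · intro t ht
    rw [Real.exp_le_exp]
    have h1 : (0:ℝ) ≤ Real.exp (-β * t) - 1 + β * t := by
      nlinarith [Real.add_one_le_exp (-β * t)]
    nlinarith [mul_nonneg ha h1]

lemma aux_exp_div (x : ℝ) (hx : 0 ≤ x) : (Real.exp (-x) - 1) * (1 + x) ≤ -x := by
  have h1 : 1 + x ≤ Real.exp x := by nlinarith [Real.add_one_le_exp x]
  have h2 : Real.exp (-x) * (1 + x) ≤ Real.exp (-x) * Real.exp x :=
    mul_le_mul_of_nonneg_left h1 (Real.exp_pos _).le
  rw [← Real.exp_add, neg_add_cancel, Real.exp_zero] at h2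
  nlinarith

set_option maxHeartbeats 1000000 in
lemma aux_upper (β β' a : ℝ) (hβ : 0 < β) (hβ' : 0 < β') (ha : 1 ≤ a) :
    (∫ t in Set.Ioi (0:ℝ), Real.exp (a * (Real.exp (-β * t) - 1) - β' * t)) ≤
      (1 + β * (Real.sqrt a)⁻¹) / (a * β) +
        Real.exp (-(β * Real.sqrt a / (1 + β))) / β' := by
  set s := Real.sqrt a with hs
  have ha0 : (0:ℝ) ≤ a := by linarith
  have hs1 : 1 ≤ s := by
    rw [hs, show (1:ℝ) = Real.sqrt 1 by simp]
    exact Real.sqrt_le_sqrt ha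
  have hs0 : 0 < s := by linarith
  set T := s⁻¹ with hT
  have hT0 : 0 < T := by positivity
  have haT : a * T = s := by
    rw [hT, ← Real.mul_self_sqrt ha0, ← hs, mul_assoc, mul_inv_cancel₀ hs0.ne']
    ring
  set f := fun t => Real.exp (a * (Real.exp (-β * t) - 1) - β' * t) with hf
  have hint := aux_integrable β β' a hβ hβ' ha0
  have h1i : IntegrableOn f (Set.Ioc 0 T) := hint.mono_set Set.Ioc_subset_Ioi_self
  have h2i : IntegrableOn f (Set.Ioi T) := hint.mono_set (Set.Ioi_subset_Ioi hT0.le)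
  have hsplit : (∫ t in Set.Ioi (0:ℝ), f t) =
      (∫ t in Set.Ioc (0:ℝ) T, f t) + ∫ t in Set.Ioi T, f t := by
    rw [← Set.Ioc_union_Ioi_eq_Ioi hT0.le,
      setIntegral_union (Set.Ioc_disjoint_Ioi le_rfl) measurableSet_Ioi h1i h2i]
  -- first piece
  have hc1 : 0 < a * β / (1 + β * T) := by positivity
  set c1 := a * β / (1 + β * T) with hc1d
  have hA : (∫ t in Set.Ioc (0:ℝ) T, f t) ≤ (1 + β * T) / (a * β) := by
    have key := aux_integral_exp_neg_mul_Ioi hc1 0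
    rw [mul_zero, neg_zero, Real.exp_zero] at key
    have step1 : (∫ t in Set.Ioc (0:ℝ) T, f t) ≤
        ∫ t in Set.Ioc (0:ℝ) T, Real.exp (-(c1 * t)) := by
      have hgint : IntegrableOn (fun t => Real.exp (-(c1 * t))) (Set.Ioi 0) := by
        simpa only [neg_mul] using exp_neg_integrableOn_Ioi 0 hc1
      refine setIntegral_mono_on h1i (hgint.mono_set Set.Ioc_subset_Ioi_self)
        measurableSet_Ioc fun t ht => ?_
      rw [hf, Real.exp_le_exp]
      obtain ⟨ht0, htT⟩ := ht
      have hbt : (0:ℝ) ≤ β * t := by positivity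
      have key2 := aux_exp_div (β * t) hbt
      have hE1 : Real.exp (-(β * t)) - 1 ≤ 0 := by
        have : Real.exp (-(β * t)) ≤ 1 := Real.exp_le_one_iff.mpr (by nlinarith)
        linarith
      -- a * (exp (-β t) - 1) ≤ -(c1 * t), and β' t ≥ 0
      have hβ't : (0:ℝ) ≤ β' * t := by positivity
      have hd1 : (0:ℝ) < 1 + β * t := by nlinarith
      have hd2 : (0:ℝ) < 1 + β * T := by nlinarith
      have goal1 : a * (Real.exp (-β * t) - 1) ≤ -(c1 * t) := by
        rw [hc1d, show -(a * β / (1 + β * T) * t) = (-(a * β * t)) / (1 + β * T) by ring,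
          le_div_iff₀ hd2]
        have e1 : (Real.exp (-(β * t)) - 1) * (1 + β * T) ≤ -(β * t) := by
          nlinarith [mul_nonneg (neg_nonneg.mpr hE1) (mul_nonneg hβ.le (by linarith : (0:ℝ) ≤ T - t))]
        have := mul_le_mul_of_nonneg_left e1 ha0
        calc a * (Real.exp (-β * t) - 1) * (1 + β * T)
            = a * ((Real.exp (-(β * t)) - 1) * (1 + β * T)) := by rw [neg_mul]; ring
          _ ≤ a * (-(β * t)) := this
          _ = -(a * β * t) := by ring
      linarith
    have step2 : (∫ t in Set.Ioc (0:ℝ) T, Real.exp (-(c1 * t))) ≤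
        ∫ t in Set.Ioi (0:ℝ), Real.exp (-(c1 * t)) := by
      have hgint : IntegrableOn (fun t => Real.exp (-(c1 * t))) (Set.Ioi 0) := by
        simpa only [neg_mul] using exp_neg_integrableOn_Ioi 0 hc1
      exact setIntegral_mono_set hgint
        (Filter.Eventually.of_forall fun t => (Real.exp_pos _).le)
        Set.Ioc_subset_Ioi_self.eventuallyLE
    calc (∫ t in Set.Ioc (0:ℝ) T, f t) ≤ ∫ t in Set.Ioi (0:ℝ), Real.exp (-(c1 * t)) :=
          step1.trans step2
      _ = 1 / c1 := key
      _ = (1 + β * T) / (a * β) := by rw [hc1d, one_div_div]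
  -- second piece
  have hB : (∫ t in Set.Ioi T, f t) ≤ Real.exp (-(β * s / (1 + β))) / β' := by
    have hd2 : (0:ℝ) < 1 + β * T := by positivity
    have hexpbd : a * (Real.exp (-β * T) - 1) ≤ -(β * s / (1 + β)) := by
      have key2 : (Real.exp (-β * T) - 1) * (1 + β * T) ≤ -(β * T) := by
        rw [neg_mul]; exact aux_exp_div (β * T) (by positivity)
      have step1 : a * (Real.exp (-β * T) - 1) ≤ -(a * β * T) / (1 + β * T) := by
        rw [le_div_iff₀ hd2]
        calc a * (Real.exp (-β * T) - 1) * (1 + β * T)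
            = a * ((Real.exp (-β * T) - 1) * (1 + β * T)) := by ring
          _ ≤ a * (-(β * T)) := mul_le_mul_of_nonneg_left key2 ha0
          _ = -(a * β * T) := by ring
      have hβT : β * T ≤ β := by
        rw [hT]
        calc β * s⁻¹ ≤ β * 1 := by
              apply mul_le_mul_of_nonneg_left _ hβ.le
              rw [inv_le_one_iff₀]; right; exact hs1
          _ = β := mul_one β
      have step2 : -(a * β * T) / (1 + β * T) ≤ -(β * s / (1 + β)) := by
        rw [show -(a * β * T) / (1 + β * T) = -((a * β * T) / (1 + β * T)) by ring,
          neg_le_neg_iff, div_le_div_iff₀ (by positivity) hd2]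
        rw [← haT]
        nlinarith [mul_nonneg (mul_nonneg (mul_nonneg ha0 hβ.le) hT0.le)
          (sub_nonneg.mpr hβT)]
      linarith
    have pt : ∀ t ∈ Set.Ioi T, f t ≤
        Real.exp (a * (Real.exp (-β * T) - 1)) * Real.exp (-(β' * t)) := by
      intro t ht
      rw [hf, ← Real.exp_add, Real.exp_le_exp]
      have hEt : Real.exp (-β * t) ≤ Real.exp (-β * T) := by
        rw [Real.exp_le_exp]
        have := Set.mem_Ioi.mp ht
        nlinarith
      nlinarith [mul_le_mul_of_nonneg_left hEt ha0]
    have hintexp : IntegrableOn (fun t => Real.exp (-(β' * t))) (Set.Ioi T) := by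
      simpa only [neg_mul] using exp_neg_integrableOn_Ioi T hβ'
    calc (∫ t in Set.Ioi T, f t) ≤
        ∫ t in Set.Ioi T, Real.exp (a * (Real.exp (-β * T) - 1)) * Real.exp (-(β' * t)) := by
          apply setIntegral_mono_on h2i (hintexp.const_mul _) measurableSet_Ioi pt
      _ = Real.exp (a * (Real.exp (-β * T) - 1)) * (Real.exp (-(β' * T)) / β') := by
          rw [MeasureTheory.integral_const_mul, aux_integral_exp_neg_mul_Ioi hβ' T]
      _ ≤ Real.exp (-(β * s / (1 + β))) * (1 / β') := by
          have h2 : Real.exp (-(β' * T)) / β' ≤ 1 / β' := by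
            gcongr
            exact Real.exp_le_one_iff.mpr (by nlinarith)
          exact mul_le_mul (Real.exp_le_exp.mpr hexpbd) h2 (by positivity) (by positivity)
      _ = Real.exp (-(β * s / (1 + β))) / β' := by ring
  calc (∫ t in Set.Ioi (0:ℝ), f t) = _ + _ := hsplit
    _ ≤ (1 + β * T) / (a * β) + Real.exp (-(β * s / (1 + β))) / β' := add_le_add hA hB
    _ = (1 + β * s⁻¹) / (a * β) + Real.exp (-(β * s / (1 + β))) / β' := by rw [hT]

theorem integral_exp_hazard_asymp (β β' : ℝ) (hβ : 0 < β) (hβ' : β < β') :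
    Tendsto (fun a : ℝ =>
        (∫ t in Set.Ioi (0:ℝ), Real.exp (a * (Real.exp (-β * t) - 1) - β' * t)) /
          (1 / (a * β)))
      atTop (nhds 1) := by
  have hβ'0 : 0 < β' := hβ.trans hβ'
  set I : ℝ → ℝ :=
    fun a => ∫ t in Set.Ioi (0:ℝ), Real.exp (a * (Real.exp (-β * t) - 1) - β' * t) with hI
  -- lower comparison function
  have hL : Tendsto (fun a : ℝ => a * β / (a * β + β')) atTop (nhds 1) := by
    have h1 : Tendsto (fun a : ℝ => β / (β + β' / a)) atTop (nhds (β / (β + 0))) := by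
      refine Tendsto.div tendsto_const_nhds
        (tendsto_const_nhds.add (Tendsto.div_atTop tendsto_const_nhds tendsto_id)) ?_
      rw [add_zero]; exact hβ.ne'
    rw [add_zero, div_self hβ.ne'] at h1
    refine h1.congr' ?_
    filter_upwards [eventually_gt_atTop 0] with a ha0
    have h2 : a * β + β' > 0 := by positivity
    field_simp
  -- upper comparison function
  have hU : Tendsto (fun a : ℝ => 1 + β * (Real.sqrt a)⁻¹ +
      a * β / β' * Real.exp (-(β * Real.sqrt a / (1 + β)))) atTop (nhds 1) := by
    have hU1 : Tendsto (fun a : ℝ => β * (Real.sqrt a)⁻¹) atTop (nhds 0) := by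
      have := (tendsto_inv_atTop_zero.comp aux_sqrt_atTop).const_mul β
      simpa using this
    have hU2 : Tendsto (fun a : ℝ => a * β / β' * Real.exp (-(β * Real.sqrt a / (1 + β))))
        atTop (nhds 0) := by
      have hc : 0 < β / (1 + β) := by positivity
      have base := (tendsto_rpow_mul_exp_neg_mul_atTop_nhds_zero 2 (β / (1 + β)) hc).comp
        aux_sqrt_atTop
      have h3 := base.const_mul (β / β')
      rw [mul_zero] at h3
      refine h3.congr' ?_
      filter_upwards [eventually_ge_atTop (0:ℝ)] with a ha0
      have hsq : Real.sqrt a ^ (2:ℝ) = a := by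
        rw [show (2:ℝ) = ((2:ℕ):ℝ) by norm_num, Real.rpow_natCast, Real.sq_sqrt ha0]
      simp only [Function.comp]
      rw [hsq, show -(β / (1 + β)) * Real.sqrt a = -(β * Real.sqrt a / (1 + β)) by ring]
      ring
    have := (tendsto_const_nhds (x := (1:ℝ)) (f := atTop)).add hU1 |>.add hU2
    simpa using this
  refine tendsto_of_tendsto_of_tendsto_of_le_of_le' hL hU ?_ ?_
  · filter_upwards [eventually_ge_atTop (1:ℝ)] with a ha
    have ha0 : (0:ℝ) < a := by linarith
    have hc : 0 < a * β + β' := by positivity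
    rw [one_div, div_inv_eq_mul]
    calc a * β / (a * β + β') = 1 / (a * β + β') * (a * β) := by ring
      _ ≤ I a * (a * β) :=
        mul_le_mul_of_nonneg_right (aux_lower β β' a hβ hβ'0 ha0.le) (by positivity)
  · filter_upwards [eventually_ge_atTop (1:ℝ)] with a ha
    have ha0 : (0:ℝ) < a := by linarith
    rw [one_div, div_inv_eq_mul]
    have h4 := aux_upper β β' a hβ hβ'0 ha
    calc I a * (a * β) ≤
        ((1 + β * (Real.sqrt a)⁻¹) / (a * β) +
          Real.exp (-(β * Real.sqrt a / (1 + β))) / β') * (a * β) :=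
          mul_le_mul_of_nonneg_right h4 (by positivity)
      _ = 1 + β * (Real.sqrt a)⁻¹ +
          a * β / β' * Real.exp (-(β * Real.sqrt a / (1 + β))) := by
          field_simp
end

section
/- Let β > 0, u ∈ ℝ^p with u(i) ≥ 1 for all i, and set ū = maxᵢ u(i). Then there exist constants C' > 0 and γ₁ > 0 such that for all γ ∈ (0, γ₁] and all ℓ ∈ (0,∞)^p, (Σᵢ e^{γβ(u(i)-1)} ℓ(i)) / (βγ uᵀℓ + 𝟙ᵀℓ) ≤ 1 - βγ/(1 + βγū) + C'γ², and consequently this supremum over ℓ is strictly less than 1 for γ small enough. -/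
set_option maxHeartbeats 1000000

theorem drift_ratio_bound (p : ℕ) (hp : 0 < p) (β : ℝ) (hβ : 0 < β)
    (u : Fin p → ℝ) (hu : ∀ i, 1 ≤ u i) (ubar : ℝ)
    (hubar : IsGreatest (Set.range u) ubar) :
    ∃ C' > (0:ℝ), ∃ γ₁ > (0:ℝ),
      (∀ γ : ℝ, 0 < γ → γ ≤ γ₁ → ∀ ℓ : Fin p → ℝ, (∀ i, 0 < ℓ i) →
        (∑ i, Real.exp (γ * β * (u i - 1)) * ℓ i) /
            (β * γ * (∑ i, u i * ℓ i) + ∑ i, ℓ i)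
          ≤ 1 - β * γ / (1 + β * γ * ubar) + C' * γ ^ 2) ∧
      ∃ γ₂, 0 < γ₂ ∧ γ₂ ≤ γ₁ ∧
        ∀ γ : ℝ, 0 < γ → γ ≤ γ₂ → ∀ ℓ : Fin p → ℝ, (∀ i, 0 < ℓ i) →
          (∑ i, Real.exp (γ * β * (u i - 1)) * ℓ i) /
              (β * γ * (∑ i, u i * ℓ i) + ∑ i, ℓ i) < 1 := by
  obtain ⟨⟨j, hj⟩, hub⟩ := hubar
  have hub' : ∀ i, u i ≤ ubar := fun i => hub ⟨i, rfl⟩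
  have hubar1 : (1:ℝ) ≤ ubar := hj ▸ hu j
  have hubarpos : (0:ℝ) < ubar := by linarith
  set M : ℝ := ubar - 1 with hMdef
  have hM0 : 0 ≤ M := by simp [hMdef]; linarith
  set C' : ℝ := 3/4*β^2*M^2 + 1 with hC'def
  have hC'pos : 0 < C' := by positivity
  set γ₁ : ℝ := 1/(β*ubar) with hγ₁def
  have hγ₁pos : 0 < γ₁ := by positivity
  clear_value M C' γ₁
  have key : ∀ γ : ℝ, 0 < γ → γ ≤ γ₁ → ∀ ℓ : Fin p → ℝ, (∀ i, 0 < ℓ i) →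
      (∑ i, Real.exp (γ * β * (u i - 1)) * ℓ i) /
          (β * γ * (∑ i, u i * ℓ i) + ∑ i, ℓ i)
        ≤ 1 - β * γ / (1 + β * γ * ubar) + C' * γ ^ 2 := by
    intro γ hγ hγ1 ℓ hℓ
    set t : ℝ := β * γ with htdef
    have ht0 : 0 < t := by positivity
    have htub : t * ubar ≤ 1 := by
      have h1 : γ * (β * ubar) ≤ γ₁ * (β * ubar) := by
        apply mul_le_mul_of_nonneg_right hγ1; positivity
      have h2 : γ₁ * (β * ubar) = 1 := by
        rw [hγ₁def]; field_simp
      calc t * ubar = γ * (β * ubar) := by ring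
        _ ≤ 1 := by rw [← h2]; exact h1
    set S : ℝ := ∑ i, ℓ i with hSdef
    set U : ℝ := ∑ i, u i * ℓ i with hUdef
    clear_value t S U
    have hS : 0 < S := by
      rw [hSdef]
      exact Finset.sum_pos (fun i _ => hℓ i) ⟨⟨0, hp⟩, Finset.mem_univ _⟩
    have hSU : S ≤ U := by
      rw [hSdef, hUdef]
      apply Finset.sum_le_sum
      intro i _
      nlinarith [hu i, (hℓ i).le]
    have hUub : U ≤ ubar * S := by
      rw [hUdef, hSdef, Finset.mul_sum]
      apply Finset.sum_le_sum
      intro i _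
      exact mul_le_mul_of_nonneg_right (hub' i) (hℓ i).le
    have hD : 0 < t * U + S := by nlinarith
    have hN : (∑ i, Real.exp (γ * β * (u i - 1)) * ℓ i)
        ≤ (1 - t + 3/4*t^2*M^2) * S + t * U := by
      rw [hSdef, hUdef, Finset.mul_sum, Finset.mul_sum, ← Finset.sum_add_distrib]
      apply Finset.sum_le_sum
      intro i _
      have hui1 : 0 ≤ u i - 1 := by linarith [hu i]
      have huiM : u i - 1 ≤ M := by simp [hMdef]; linarith [hub' i]
      have hx0 : 0 ≤ γ * β * (u i - 1) := by positivity
      have hx1 : γ * β * (u i - 1) ≤ 1 := by nlinarith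
      have hb := Real.exp_bound (x := γ * β * (u i - 1))
        (by rw [abs_of_nonneg hx0]; exact hx1) (n := 2) (by norm_num)
      rw [abs_of_nonneg hx0] at hb
      simp [Finset.sum_range_succ] at hb
      rw [abs_le] at hb
      have hexp : Real.exp (γ * β * (u i - 1))
          ≤ 1 + t * (u i - 1) + 3/4 * t^2 * M^2 := by
        have h1 := hb.2
        have hsq : (u i - 1)^2 ≤ M^2 := by nlinarith
        have hsq2 : t^2 * (u i - 1)^2 ≤ t^2 * M^2 :=
          mul_le_mul_of_nonneg_left hsq (sq_nonneg t)
        have heq : (γ * β * (u i - 1))^2 = t^2 * (u i - 1)^2 := by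
          rw [htdef]; ring
        have heq2 : γ * β * (u i - 1) = t * (u i - 1) := by rw [htdef]; ring
        rw [heq, heq2] at h1
        rw [heq2]
        nlinarith [h1, hsq2]
      nlinarith [(hℓ i).le, hexp]
    have htub1 : 0 < 1 + t * ubar := by nlinarith
    have hA : t / (1 + t * ubar) * (1 + t * ubar) = t :=
      div_mul_cancel₀ _ (ne_of_gt htub1)
    have hA0 : 0 ≤ t / (1 + t * ubar) := by positivity
    have hAD : t / (1 + t * ubar) * (t * U + S) ≤ t * S := by
      have hDle : t * U + S ≤ (1 + t * ubar) * S := by nlinarith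
      calc t / (1 + t * ubar) * (t * U + S)
          ≤ t / (1 + t * ubar) * ((1 + t * ubar) * S) := by
            apply mul_le_mul_of_nonneg_left hDle hA0
        _ = t * S := by rw [← mul_assoc, hA]
    have hcS : 3/4*t^2*M^2 * S ≤ C' * γ^2 * (t * U + S) := by
      have h1 : 3/4*t^2*M^2 = 3/4*β^2*M^2 * γ^2 := by rw [htdef]; ring
      have h2 : S ≤ t * U + S := by nlinarith
      have e : C' * γ^2 = 3/4*t^2*M^2 + γ^2 := by rw [hC'def, htdef]; ring
      have hc0' : (0:ℝ) ≤ 3/4*t^2*M^2 := by positivity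
      have htU : (0:ℝ) ≤ t * U := by nlinarith
      rw [e]
      nlinarith [mul_nonneg hc0' htU, mul_nonneg (sq_nonneg γ) hD.le]
    rw [div_le_iff₀ hD]
    have hexpand : (1 - t / (1 + t * ubar) + C' * γ ^ 2) * (t * U + S)
        = (t * U + S) - t / (1 + t * ubar) * (t * U + S) + C' * γ^2 * (t * U + S) := by
      ring
    calc (∑ i, Real.exp (γ * β * (u i - 1)) * ℓ i)
        ≤ (1 - t + 3/4*t^2*M^2) * S + t * U := hN
      _ ≤ (1 - t / (1 + t * ubar) + C' * γ ^ 2) * (t * U + S) := by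
          rw [hexpand]; nlinarith [hAD, hcS]
  refine ⟨C', hC'pos, γ₁, hγ₁pos, key, ?_⟩
  set c0 : ℝ := β / (1 + β * γ₁ * ubar) with hc0def
  have hc0pos : 0 < c0 := by positivity
  refine ⟨min γ₁ (c0 / (2 * C')), lt_min hγ₁pos (by positivity), min_le_left _ _, ?_⟩
  intro γ hγ hγ2 ℓ hℓ
  have hγ1 : γ ≤ γ₁ := le_trans hγ2 (min_le_left _ _)
  have hγc : γ ≤ c0 / (2 * C') := le_trans hγ2 (min_le_right _ _)
  have hmain := key γ hγ hγ1 ℓ hℓ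
  have h1 : 1 + β * γ * ubar ≤ 1 + β * γ₁ * ubar := by
    nlinarith [mul_le_mul_of_nonneg_left hγ1 (show (0:ℝ) ≤ β * ubar by positivity)]
  have h2 : 0 < 1 + β * γ * ubar := by positivity
  have h3 : c0 ≤ β / (1 + β * γ * ubar) := by
    rw [hc0def]
    apply div_le_div_of_nonneg_left hβ.le h2 h1
  have h4 : C' * γ < c0 := by
    calc C' * γ ≤ C' * (c0 / (2 * C')) := by nlinarith
      _ = c0 / 2 := by field_simp
      _ < c0 := by linarith
  have h5 : C' * γ^2 < β * γ / (1 + β * γ * ubar) := by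
    have : C' * γ < β / (1 + β * γ * ubar) := lt_of_lt_of_le h4 h3
    have h6 : C' * γ * γ < β / (1 + β * γ * ubar) * γ :=
      mul_lt_mul_of_pos_right this hγ
    calc C' * γ^2 = C' * γ * γ := by ring
      _ < β / (1 + β * γ * ubar) * γ := h6
      _ = β * γ / (1 + β * γ * ubar) := by ring
  linarith
end

section
/- Let p ≥ 1, M > 0, and let Γ be an invertible p×p real matrix. There exists a probability measure ν on ℝ^p such that for all γ > 0 there is ε > 0 with the following property: for every measurable g : ℝ^p → [0,∞) and every ℓ ∈ (0,M]^p, ∫_D g(uℓ + Γθ) u^γ du dθ ≥ ε ∫ g dν, where D = {(u,θ) ∈ (0,1] × (0,1]^p : 0 < u < θ(1) < ⋯ < θ(p)}. -/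
open MeasureTheory Matrix ENNReal

set_option maxHeartbeats 1000000 in
theorem smallset_minorization (p : ℕ) (hp : 0 < p)
    (Γ : Matrix (Fin p) (Fin p) ℝ) (hΓ : IsUnit Γ.det) :
    ∃ ν : Measure (Fin p → ℝ), IsProbabilityMeasure ν ∧
      ∀ M : ℝ, 0 < M → ∀ γ : ℝ, 0 < γ → ∃ ε : ℝ, 0 < ε ∧
        ∀ g : (Fin p → ℝ) → ℝ≥0∞, Measurable g →
          ∀ ℓ : Fin p → ℝ, (∀ i, 0 < ℓ i ∧ ℓ i ≤ M) →
            ENNReal.ofReal ε * ∫⁻ ω, g ω ∂ν ≤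
              ∫⁻ z in {z : ℝ × (Fin p → ℝ) |
                  0 < z.1 ∧ z.1 < z.2 ⟨0, hp⟩ ∧ StrictMono z.2 ∧ ∀ i, z.2 i ≤ 1},
                g (z.1 • ℓ + Γ *ᵥ z.2) * ENNReal.ofReal (z.1 ^ γ) ∂volume := by
  classical
  have hp1 : (0:ℝ) < (p:ℝ) + 1 := by positivity
  set δ : ℝ := 1 / (4 * ((p:ℝ) + 1)) with hδdef
  have hδ : 0 < δ := by positivity
  set c : Fin p → ℝ := fun i => ((i : ℕ) + 1) / ((p:ℝ) + 1) with hcdef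
  have h4δ : 4 * δ = 1 / ((p:ℝ) + 1) := by
    rw [hδdef]; field_simp
  set B : Set (Fin p → ℝ) := Set.univ.pi fun i => Set.Ioo (c i - δ) (c i + δ) with hBdef
  set Bη : Set (Fin p → ℝ) := Set.univ.pi fun i => Set.Ioo (c i - δ/2) (c i + δ/2) with hBηdef
  have hBm : MeasurableSet B := MeasurableSet.univ_pi fun i => measurableSet_Ioo
  have hBηm : MeasurableSet Bη := MeasurableSet.univ_pi fun i => measurableSet_Ioo
  have hVeq : volume Bη = ENNReal.ofReal (δ ^ p) := by
    rw [hBηdef, volume_pi_pi]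
    have : ∀ i : Fin p, volume (Set.Ioo (c i - δ/2) (c i + δ/2)) = ENNReal.ofReal δ := by
      intro i
      rw [Real.volume_Ioo]
      congr 1
      ring
    simp only [this, Finset.prod_const, Finset.card_univ, Fintype.card_fin]
    rw [← ENNReal.ofReal_pow hδ.le]
  have hV0 : volume Bη ≠ 0 := by
    rw [hVeq]
    simp [ENNReal.ofReal_eq_zero, not_le]
    positivity
  have hVtop : volume Bη ≠ ⊤ := by rw [hVeq]; exact ENNReal.ofReal_ne_top
  have hmap : Measurable fun θ : Fin p → ℝ => Γ *ᵥ θ :=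
    (LinearMap.continuous_of_finiteDimensional (Matrix.mulVecLin Γ)).measurable
  have hbase : IsProbabilityMeasure ((volume Bη)⁻¹ • volume.restrict Bη) := by
    constructor
    rw [Measure.smul_apply, Measure.restrict_apply_univ, smul_eq_mul,
      ENNReal.inv_mul_cancel hV0 hVtop]
  refine ⟨Measure.map (fun θ => Γ *ᵥ θ) ((volume Bη)⁻¹ • volume.restrict Bη),
    Measure.isProbabilityMeasure_map hmap.aemeasurable, ?_⟩
  intro M hM γ hγ
  set K : ℝ := (∑ i, ∑ j, |Γ⁻¹ i j|) + 1 with hKdef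
  have hK0 : 0 < K := by
    rw [hKdef]
    positivity
  set b : ℝ := min (3 * δ) (δ / (2 * K * M)) with hbdef
  have hb0 : 0 < b := lt_min (by positivity) (by positivity)
  set a : ℝ := b / 2 with hadef
  have ha0 : 0 < a := by positivity
  have hab : a < b := by rw [hadef]; linarith
  have hba : b - a = a := by rw [hadef]; ring
  refine ⟨a ^ γ * a * δ ^ p, by positivity, ?_⟩
  intro g hg ℓ hℓ
  set h : (Fin p → ℝ) → ℝ≥0∞ := fun θ => g (Γ *ᵥ θ) with hhdef
  have hhm : Measurable h := hg.comp hmap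
  set J : ℝ≥0∞ := ∫⁻ θ in Bη, h θ with hJdef
  -- Step A : integral against ν
  have stepA : (∫⁻ ω, g ω ∂(Measure.map (fun θ => Γ *ᵥ θ)
      ((volume Bη)⁻¹ • volume.restrict Bη))) = (volume Bη)⁻¹ * J := by
    rw [lintegral_map hg hmap, lintegral_smul_measure, smul_eq_mul]
  -- Step B : translation bound
  have stepB : ∀ u ∈ Set.Ioo a b, J ≤ ∫⁻ θ in B, g (u • ℓ + Γ *ᵥ θ) := by
    intro u hu
    obtain ⟨hu1, hu2⟩ := hu
    have hu0 : 0 < u := ha0.trans hu1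
    set v : Fin p → ℝ := u • (Γ⁻¹ *ᵥ ℓ) with hvdef
    have hvbound : ∀ i, |v i| ≤ δ / 2 := by
      intro i
      have h1 : |(Γ⁻¹ *ᵥ ℓ) i| ≤ K * M := by
        have e1 : |(Γ⁻¹ *ᵥ ℓ) i| ≤ ∑ j, |Γ⁻¹ i j| * M := by
          calc |(Γ⁻¹ *ᵥ ℓ) i| = |∑ j, Γ⁻¹ i j * ℓ j| := rfl
            _ ≤ ∑ j, |Γ⁻¹ i j * ℓ j| := Finset.abs_sum_le_sum_abs _ _
            _ ≤ ∑ j, |Γ⁻¹ i j| * M := by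
                refine Finset.sum_le_sum fun j _ => ?_
                rw [abs_mul]
                exact mul_le_mul_of_nonneg_left
                  (by rw [abs_of_pos (hℓ j).1]; exact (hℓ j).2) (abs_nonneg _)
        have e2 : (∑ j, |Γ⁻¹ i j|) ≤ K := by
          rw [hKdef]
          have : (∑ j, |Γ⁻¹ i j|) ≤ ∑ i', ∑ j, |Γ⁻¹ i' j| :=
            Finset.single_le_sum (f := fun i' => ∑ j, |Γ⁻¹ i' j|)
              (fun i' _ => Finset.sum_nonneg fun j _ => abs_nonneg _) (Finset.mem_univ i)
          linarith
        calc |(Γ⁻¹ *ᵥ ℓ) i| ≤ ∑ j, |Γ⁻¹ i j| * M := e1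
          _ = (∑ j, |Γ⁻¹ i j|) * M := by rw [Finset.sum_mul]
          _ ≤ K * M := mul_le_mul_of_nonneg_right e2 hM.le
      have h2 : |v i| = u * |(Γ⁻¹ *ᵥ ℓ) i| := by
        rw [hvdef]
        simp [abs_mul, abs_of_pos hu0]
      have h3 : u * (K * M) ≤ δ / 2 := by
        have hbb : b ≤ δ / (2 * K * M) := min_le_right _ _
        have := mul_le_mul_of_nonneg_right (le_trans hu2.le hbb) (by positivity : (0:ℝ) ≤ K * M)
        calc u * (K * M) ≤ δ / (2 * K * M) * (K * M) := this
          _ = δ / 2 := by field_simp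
      calc |v i| = u * |(Γ⁻¹ *ᵥ ℓ) i| := h2
        _ ≤ u * (K * M) := mul_le_mul_of_nonneg_left h1 hu0.le
        _ ≤ δ / 2 := h3
    have hΓv : Γ *ᵥ v = u • ℓ := by
      rw [hvdef, Matrix.mulVec_smul, Matrix.mulVec_mulVec, Matrix.mul_nonsing_inv Γ hΓ,
        Matrix.one_mulVec]
    have hpt : ∀ θ, g (u • ℓ + Γ *ᵥ θ) = h (θ + v) := by
      intro θ
      rw [hhdef]
      simp only
      rw [Matrix.mulVec_add, hΓv, add_comm]
    set T : Set (Fin p → ℝ) := (fun x => x - v) ⁻¹' B with hTdef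
    have hTm : MeasurableSet T := hBm.preimage (measurable_id.sub measurable_const)
    have hind : ∀ θ, B.indicator (fun t => h (t + v)) θ = T.indicator h (θ + v) := by
      intro θ
      by_cases hθ : θ ∈ B
      · rw [Set.indicator_of_mem hθ, Set.indicator_of_mem]
        rw [hTdef]; simp [hθ]
      · rw [Set.indicator_of_notMem hθ, Set.indicator_of_notMem]
        rw [hTdef]; simp [hθ]
    have htrans : (∫⁻ θ in B, g (u • ℓ + Γ *ᵥ θ)) = ∫⁻ θ in T, h θ := by
      rw [← lintegral_indicator hBm, ← lintegral_indicator hTm]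
      calc (∫⁻ θ, B.indicator (fun t => g (u • ℓ + Γ *ᵥ t)) θ)
          = ∫⁻ θ, T.indicator h (θ + v) := by
            congr 1
            funext θ
            rw [show (fun t => g (u • ℓ + Γ *ᵥ t)) = fun t => h (t + v) from funext hpt]
            exact hind θ
        _ = ∫⁻ θ, T.indicator h θ := lintegral_add_right_eq_self _ v
    rw [htrans]
    refine lintegral_mono_set ?_
    intro θ hθ
    rw [hTdef]
    intro i _
    have h1 := hθ i (Set.mem_univ i)
    simp only [Set.mem_Ioo] at h1 ⊢
    have h2 := hvbound i
    rw [abs_le] at h2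
    constructor
    · simp only [Pi.sub_apply]
      linarith [h1.1, h2.2]
    · simp only [Pi.sub_apply]
      linarith [h1.2, h2.1]
  -- Step C : box inside D
  have hSD : (Set.Ioo a b) ×ˢ B ⊆ {z : ℝ × (Fin p → ℝ) |
      0 < z.1 ∧ z.1 < z.2 ⟨0, hp⟩ ∧ StrictMono z.2 ∧ ∀ i, z.2 i ≤ 1} := by
    rintro ⟨u, θ⟩ ⟨hu, hθ⟩
    simp only [Set.mem_Ioo] at hu
    have hθi : ∀ i : Fin p, c i - δ < θ i ∧ θ i < c i + δ := by
      intro i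
      exact hθ i (Set.mem_univ i)
    have hu0 : 0 < u := ha0.trans hu.1
    have hub : u < 3 * δ := lt_of_lt_of_le hu.2 (min_le_left _ _)
    refine ⟨hu0, ?_, ?_, ?_⟩
    · have hc0 : c ⟨0, hp⟩ = 4 * δ := by
        rw [hcdef, h4δ]; norm_num
      have := (hθi ⟨0, hp⟩).1
      rw [hc0] at this
      linarith
    · intro i j hij
      have hci : c j - c i ≥ 4 * δ := by
        rw [hcdef, h4δ]
        have hij' : ((i : ℕ) : ℝ) + 1 ≤ ((j : ℕ) : ℝ) := by
          exact_mod_cast Nat.succ_le_of_lt hij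
        rw [div_sub_div_same, ge_iff_le, div_le_div_iff₀ hp1 hp1]
        nlinarith
      have h1 := (hθi i).2
      have h2 := (hθi j).1
      linarith
    · intro i
      have h1 := (hθi i).2
      have hle : ((i : ℕ) : ℝ) + 1 ≤ (p : ℝ) := by exact_mod_cast i.isLt
      have hc1 : c i + δ ≤ 1 := by
        rw [hcdef, hδdef]
        rw [div_add_div _ _ (ne_of_gt hp1) (by positivity), div_le_one (by positivity)]
        nlinarith
      linarith
  -- measurability of the main integrand
  have hGm : Measurable fun z : ℝ × (Fin p → ℝ) => g (z.1 • ℓ + Γ *ᵥ z.2) := by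
    refine hg.comp ?_
    have hcont : Continuous fun z : ℝ × (Fin p → ℝ) => z.1 • ℓ + Γ *ᵥ z.2 := by
      refine Continuous.add ?_ ?_
      · exact continuous_fst.smul continuous_const
      · exact ((LinearMap.continuous_of_finiteDimensional
          (Matrix.mulVecLin Γ))).comp continuous_snd
    exact hcont.measurable
  -- Step D : product decomposition
  have stepD : (∫⁻ z in (Set.Ioo a b) ×ˢ B, g (z.1 • ℓ + Γ *ᵥ z.2) ∂volume)
      = ∫⁻ u in Set.Ioo a b, ∫⁻ θ in B, g (u • ℓ + Γ *ᵥ θ) := by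
    rw [Measure.volume_eq_prod ℝ (Fin p → ℝ), ← Measure.prod_restrict, lintegral_prod _ hGm.aemeasurable]
  -- Step E : lower bound on the inner integral
  have stepE : ENNReal.ofReal a * J
      ≤ ∫⁻ u in Set.Ioo a b, ∫⁻ θ in B, g (u • ℓ + Γ *ᵥ θ) := by
    have h1 : (∫⁻ _ in Set.Ioo a b, J ∂volume)
        ≤ ∫⁻ u in Set.Ioo a b, ∫⁻ θ in B, g (u • ℓ + Γ *ᵥ θ) := by
      refine lintegral_mono_ae ?_
      exact (ae_restrict_iff' measurableSet_Ioo).2 (Filter.Eventually.of_forall stepB)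
    calc ENNReal.ofReal a * J = J * volume (Set.Ioo a b) := by
          rw [Real.volume_Ioo, hba, mul_comm]
      _ = ∫⁻ _ in Set.Ioo a b, J ∂volume := (setLIntegral_const _ _).symm
      _ ≤ _ := h1
  -- Step F : power weight bound on the box
  have stepF : ENNReal.ofReal (a ^ γ) * ∫⁻ z in (Set.Ioo a b) ×ˢ B, g (z.1 • ℓ + Γ *ᵥ z.2) ∂volume
      ≤ ∫⁻ z in (Set.Ioo a b) ×ˢ B,
          g (z.1 • ℓ + Γ *ᵥ z.2) * ENNReal.ofReal (z.1 ^ γ) ∂volume := by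
    rw [← lintegral_const_mul _ hGm]
    refine lintegral_mono_ae ?_
    refine (ae_restrict_iff' (measurableSet_Ioo.prod hBm)).2 (Filter.Eventually.of_forall ?_)
    rintro ⟨u, θ⟩ ⟨hu, _⟩
    simp only [Set.mem_Ioo] at hu
    rw [mul_comm]
    refine mul_le_mul_right ?_ _
    exact ENNReal.ofReal_le_ofReal (Real.rpow_le_rpow ha0.le hu.1.le hγ.le)
  -- put everything together
  rw [stepA]
  have hsplit : ENNReal.ofReal (a ^ γ * a * δ ^ p)
      = ENNReal.ofReal (a ^ γ) * ENNReal.ofReal a * ENNReal.ofReal (δ ^ p) := by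
    rw [ENNReal.ofReal_mul (by positivity), ENNReal.ofReal_mul (by positivity)]
  have hcancel : ENNReal.ofReal (δ ^ p) * (ENNReal.ofReal (δ ^ p))⁻¹ = 1 := by
    refine ENNReal.mul_inv_cancel ?_ ENNReal.ofReal_ne_top
    simp only [ne_eq, ENNReal.ofReal_eq_zero, not_le]
    positivity
  calc ENNReal.ofReal (a ^ γ * a * δ ^ p) * ((volume Bη)⁻¹ * J)
      = ENNReal.ofReal (a ^ γ) * ENNReal.ofReal a *
          (ENNReal.ofReal (δ ^ p) * (ENNReal.ofReal (δ ^ p))⁻¹) * J := by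
        rw [hsplit, hVeq]; ring
    _ = ENNReal.ofReal (a ^ γ) * (ENNReal.ofReal a * J) := by rw [hcancel]; ring
    _ ≤ ENNReal.ofReal (a ^ γ) *
          ∫⁻ z in (Set.Ioo a b) ×ˢ B, g (z.1 • ℓ + Γ *ᵥ z.2) ∂volume := by
        rw [stepD]
        exact mul_le_mul_right stepE _
    _ ≤ ∫⁻ z in (Set.Ioo a b) ×ˢ B,
          g (z.1 • ℓ + Γ *ᵥ z.2) * ENNReal.ofReal (z.1 ^ γ) ∂volume := stepF
    _ ≤ _ := lintegral_mono_set hSD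
end

section
/- Let T₀, T₁, ..., T_p be independent positive random variables where T_j has hazard rate h_j bounded above by H for each j ≠ i, and T_i has hazard rate bounded below by h_min > 0 and above by H. Let U = min_{j≠i} T_j. Then for any nonnegative measurable function g on ℝ₊, E[g(T_i) 1{T_i < U}] ≥ h_min ∫₀^∞ g(t) e^{-(p+1)H t} dt. -/
open MeasureTheory ProbabilityTheory ENNReal Set Filter Topology Metric

-- measurable inf'
lemma meas_inf' {Ω κ : Type*} [MeasurableSpace Ω] (s : Finset κ) (hs : s.Nonempty)
    (f : κ → Ω → ℝ) (hf : ∀ j, Measurable (f j)) :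
    Measurable fun ω => s.inf' hs (fun j => f j ω) := by
  induction hs using Finset.Nonempty.cons_induction with
  | singleton j => simpa using hf j
  | cons j s hj hs ih =>
    have : (fun ω => (Finset.cons j s hj).inf' (Finset.cons_nonempty hj) fun k => f k ω)
        = fun ω => min (f j ω) (s.inf' hs fun k => f k ω) :=
      funext fun ω => Finset.inf'_cons hs _
    rw [this]; exact (hf j).min ih

lemma inf'_attach' {κ : Type*} (s : Finset κ) (hs : s.Nonempty) (f : κ → ℝ) :
    s.attach.inf' (by simpa using hs) (fun j => f j) = s.inf' hs f := by
  apply le_antisymm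
  · exact Finset.le_inf' _ _ fun j hj => Finset.inf'_le _ (Finset.mem_attach _ ⟨j, hj⟩)
  · exact Finset.le_inf' _ _ fun j _ => Finset.inf'_le _ (by simp [j.2])

-- Core density lemma
lemma core_density (ν : Measure ℝ) [IsProbabilityMeasure ν] (hi : ℝ → ℝ) (H hmin : ℝ)
    (hminpos : 0 < hmin) (hint : ∀ t, IntervalIntegrable hi volume 0 t)
    (hs : ∀ t : ℝ, 0 ≤ t → ν (Set.Ioi t) = ENNReal.ofReal (Real.exp (-∫ u in (0:ℝ)..t, hi u)))
    (hH : ∀ t : ℝ, 0 ≤ t → hi t ≤ H) (hlow : ∀ t : ℝ, 0 ≤ t → hmin ≤ hi t)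
    (G : ℝ → ℝ≥0∞) (hG : Measurable G) :
    ∫⁻ t in Set.Ioi (0:ℝ), G t * ENNReal.ofReal (hmin * Real.exp (-(H * t))) ≤ ∫⁻ t, G t ∂ν := by
  have hH0 : 0 ≤ H := le_trans hminpos.le ((hlow 0 le_rfl).trans (hH 0 le_rfl))
  set A : ℝ → ℝ := fun t => ∫ u in (0:ℝ)..t, hi u with hA
  have hsub : ∀ a b : ℝ, 0 ≤ a → a ≤ b → IntervalIntegrable hi volume a b := by
    intro a b ha hab
    refine (hint b).mono_set ?_
    rw [Set.uIcc_of_le hab, Set.uIcc_of_le (ha.trans hab)]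
    exact Set.Icc_subset_Icc ha le_rfl
  have hAdiff : ∀ a b : ℝ, 0 ≤ a → a ≤ b → A b - A a = ∫ u in a..b, hi u := by
    intro a b ha hab
    have := intervalIntegral.integral_add_adjacent_intervals (hint a) (hsub a b ha hab)
    simp only [hA]; linarith
  have hAmono : ∀ a b : ℝ, 0 ≤ a → a ≤ b → hmin * (b - a) ≤ A b - A a := by
    intro a b ha hab
    rw [hAdiff a b ha hab]
    have : ∫ u in a..b, hmin ≤ ∫ u in a..b, hi u := by
      refine intervalIntegral.integral_mono_on hab intervalIntegrable_const (hsub a b ha hab) ?_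
      intro x hx; exact hlow x (ha.trans hx.1)
    simpa [mul_comm] using this
  have hAle : ∀ a : ℝ, 0 ≤ a → A a ≤ H * a := by
    intro a ha
    have : ∫ u in (0:ℝ)..a, hi u ≤ ∫ u in (0:ℝ)..a, H := by
      refine intervalIntegral.integral_mono_on ha (hint a) intervalIntegrable_const ?_
      intro x hx; exact hH x hx.1
    simpa [mul_comm] using this
  -- measure inequality
  set f : ℝ → ℝ≥0∞ := (Set.Ioi (0:ℝ)).indicator (fun t => ENNReal.ofReal (hmin * Real.exp (-(H * t)))) with hf
  have hfmeas : Measurable f := by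
    refine Measurable.indicator ?_ measurableSet_Ioi
    exact (measurable_const.mul ((measurable_id.const_mul H).neg.exp)).ennreal_ofReal
  have hle : volume.withDensity f ≤ ν := by
    refine le_trans (withDensity_mono ?_) (Measure.withDensity_rnDeriv_le ν volume)
    filter_upwards [Besicovitch.ae_tendsto_rnDeriv ν volume] with t ht
    rcases le_or_gt t 0 with h0 | h0
    · have hmem : t ∉ Set.Ioi (0:ℝ) := by simpa using h0
      simp [hf, Set.indicator_of_notMem hmem]
    rw [hf, Set.indicator_of_mem (by simpa using h0 : t ∈ Set.Ioi (0:ℝ))]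
    -- lower bound the limit
    have hsurvA : ∀ s : ℝ, 0 ≤ s → ν (Set.Ioi s) = ENNReal.ofReal (Real.exp (-A s)) :=
      fun s hs' => hs s hs'
    have hν : ∀ r : ℝ, 0 < r → r < t →
        ENNReal.ofReal (Real.exp (-(H * t)) * (1 - Real.exp (-(2 * hmin * r))) / (2 * r))
          ≤ ν (closedBall t r) / volume (closedBall t r) := by
      intro r hr hrt
      have ha0 : (0:ℝ) ≤ t - r := by linarith
      have hab : t - r ≤ t + r := by linarith
      set X : ℝ := Real.exp (-(H * t)) * (1 - Real.exp (-(2 * hmin * r))) with hX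
      have h4 : (0:ℝ) ≤ 1 - Real.exp (-(2 * hmin * r)) := by
        have : Real.exp (-(2 * hmin * r)) ≤ 1 := by
          apply Real.exp_le_one_iff.2; nlinarith
        linarith
      have hX0 : 0 ≤ X := mul_nonneg (Real.exp_pos _).le h4
      have hIoc : ENNReal.ofReal X ≤ ν (Set.Ioc (t - r) (t + r)) := by
        have hsplit : ν (Set.Ioc (t - r) (t + r)) + ν (Set.Ioi (t + r)) = ν (Set.Ioi (t - r)) := by
          rw [← measure_union (Set.Ioc_disjoint_Ioi le_rfl) measurableSet_Ioi,
            Set.Ioc_union_Ioi_eq_Ioi hab]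
        have hreal : X + Real.exp (-(A (t + r))) ≤ Real.exp (-(A (t - r))) := by
          have h1 : Real.exp (-(H * t)) ≤ Real.exp (-(A (t - r))) := by
            apply Real.exp_le_exp.2
            have := hAle (t - r) ha0
            have hHt : H * (t - r) ≤ H * t := by nlinarith
            linarith
          have h2 : Real.exp (-(A (t + r) - A (t - r))) ≤ Real.exp (-(2 * hmin * r)) := by
            apply Real.exp_le_exp.2
            have := hAmono (t - r) (t + r) ha0 hab
            nlinarith
          have h3 : Real.exp (-(A (t + r))) = Real.exp (-(A (t - r))) * Real.exp (-(A (t + r) - A (t - r))) := by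
            rw [← Real.exp_add]; ring_nf
          have h6 : 1 - Real.exp (-(A (t + r) - A (t - r))) ≥ 1 - Real.exp (-(2 * hmin * r)) := by
            linarith
          rw [hX, h3]
          nlinarith [Real.exp_pos (-(A (t - r))), Real.exp_pos (-(H * t))]
        have hend : ENNReal.ofReal X + ν (Set.Ioi (t + r))
            ≤ ν (Set.Ioc (t - r) (t + r)) + ν (Set.Ioi (t + r)) := by
          rw [hsplit, hsurvA (t + r) (by linarith), hsurvA (t - r) ha0,
            ← ENNReal.ofReal_add hX0 (Real.exp_pos _).le]
          exact ENNReal.ofReal_le_ofReal hreal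
        exact (ENNReal.add_le_add_iff_right (measure_ne_top ν _)).1 hend
      have hball : ν (Set.Ioc (t - r) (t + r)) ≤ ν (closedBall t r) := by
        apply measure_mono
        rw [Real.closedBall_eq_Icc]
        exact Set.Ioc_subset_Icc_self
      have hvol : volume (closedBall t r) = ENNReal.ofReal (2 * r) := by
        rw [Real.volume_closedBall]
      rw [hvol, ENNReal.le_div_iff_mul_le (Or.inl (by positivity)) (Or.inl ofReal_ne_top)]
      calc ENNReal.ofReal (X / (2 * r)) * ENNReal.ofReal (2 * r)
          = ENNReal.ofReal (X / (2 * r) * (2 * r)) :=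
            (ENNReal.ofReal_mul (by positivity : (0:ℝ) ≤ X / (2 * r))).symm
        _ = ENNReal.ofReal X := by rw [div_mul_cancel₀]; positivity
        _ ≤ ν (closedBall t r) := hIoc.trans hball
    have hlim : Tendsto (fun r : ℝ =>
        ENNReal.ofReal (Real.exp (-(H * t)) * (1 - Real.exp (-(2 * hmin * r))) / (2 * r)))
        (𝓝[>] 0) (𝓝 (ENNReal.ofReal (hmin * Real.exp (-(H * t))))) := by
      have hψ : HasDerivAt (fun r : ℝ => 1 - Real.exp (-(2 * hmin * r))) (2 * hmin) 0 := by
        have h1 : HasDerivAt (fun r : ℝ => -(2 * hmin * r)) (-(2 * hmin)) 0 := by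
          simpa [Pi.neg_def] using ((hasDerivAt_id (0:ℝ)).const_mul (2 * hmin)).neg
        have h2 := h1.exp
        simp only [mul_zero, neg_zero, Real.exp_zero, one_mul] at h2
        simpa using (h2.const_sub 1)
      have hslope : Tendsto (fun r : ℝ => (1 - Real.exp (-(2 * hmin * r))) / r)
          (𝓝[≠] 0) (𝓝 (2 * hmin)) := by
        have := hasDerivAt_iff_tendsto_slope.1 hψ
        refine this.congr (fun r => ?_)
        simp [slope_def_field, div_eq_mul_inv]
      have hreal : Tendsto (fun r : ℝ => Real.exp (-(H * t)) * (1 - Real.exp (-(2 * hmin * r))) / (2 * r))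
          (𝓝[>] 0) (𝓝 (hmin * Real.exp (-(H * t)))) := by
        have hmono : 𝓝[>] (0:ℝ) ≤ 𝓝[≠] (0:ℝ) :=
          nhdsWithin_mono 0 (fun x hx => ne_of_gt hx)
        have h1 : Tendsto (fun r : ℝ => Real.exp (-(H * t)) / 2 * ((1 - Real.exp (-(2 * hmin * r))) / r))
            (𝓝[>] 0) (𝓝 (Real.exp (-(H * t)) / 2 * (2 * hmin))) :=
          ((hslope.mono_left hmono).const_mul _)
        have h2 : Real.exp (-(H * t)) / 2 * (2 * hmin) = hmin * Real.exp (-(H * t)) := by ring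
        rw [h2] at h1
        refine h1.congr' ?_
        filter_upwards [self_mem_nhdsWithin] with r hr
        have hr0 : r ≠ 0 := ne_of_gt hr
        field_simp
      exact (ENNReal.continuous_ofReal.continuousAt.tendsto.comp hreal)
    refine le_of_tendsto_of_tendsto hlim ht ?_
    filter_upwards [Ioo_mem_nhdsGT_of_mem ⟨le_rfl, h0⟩] with r hr
    exact hν r hr.1 hr.2
  calc ∫⁻ t in Set.Ioi (0:ℝ), G t * ENNReal.ofReal (hmin * Real.exp (-(H * t)))
      = ∫⁻ t, (Set.Ioi (0:ℝ)).indicator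
          (fun t => G t * ENNReal.ofReal (hmin * Real.exp (-(H * t)))) t := by
        rw [lintegral_indicator measurableSet_Ioi]
    _ = ∫⁻ t, G t ∂(volume.withDensity f) := by
        rw [lintegral_withDensity_eq_lintegral_mul volume hfmeas hG]
        congr 1
        ext t
        rcases le_or_gt t 0 with h0 | h0
        · have hmem : t ∉ Set.Ioi (0:ℝ) := by simpa using h0
          simp [hf, Set.indicator_of_notMem hmem]
        · have hmem : t ∈ Set.Ioi (0:ℝ) := by simpa using h0
          simp [hf, Set.indicator_of_mem hmem, mul_comm]
    _ ≤ ∫⁻ t, G t ∂ν := lintegral_mono' hle le_rfl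

set_option maxHeartbeats 1000000 in
theorem min_mark_lower_bound (Ω : Type*) [MeasurableSpace Ω]
    (P : Measure Ω) [IsProbabilityMeasure P]
    (p : ℕ) (T : Fin (p + 1) → Ω → ℝ) (hmeas : ∀ j, Measurable (T j))
    (hindep : iIndepFun T P)
    (hTpos : ∀ j ω, 0 < T j ω)
    (h : Fin (p + 1) → ℝ → ℝ) (H hmin : ℝ) (hminpos : 0 < hmin)
    (hhint : ∀ j t, IntervalIntegrable (h j) volume 0 t)
    (hsurv : ∀ j, ∀ t : ℝ, 0 ≤ t →
      P {ω | t < T j ω} = ENNReal.ofReal (Real.exp (-∫ u in (0:ℝ)..t, h j u)))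
    (i : Fin (p + 1))
    (hH : ∀ j, ∀ t : ℝ, 0 ≤ t → h j t ≤ H)
    (hlow : ∀ t : ℝ, 0 ≤ t → hmin ≤ h i t)
    (g : ℝ → ℝ≥0∞) (hg : Measurable g) :
    ENNReal.ofReal hmin *
        ∫⁻ t in Set.Ioi (0:ℝ), g t * ENNReal.ofReal (Real.exp (-((p:ℝ) + 1) * H * t))
      ≤ ∫⁻ ω in {ω | ∀ j, j ≠ i → T i ω < T j ω}, g (T i ω) ∂P := by
  classical
  have hH0 : 0 ≤ H := le_trans hminpos.le ((hlow 0 le_rfl).trans (hH i 0 le_rfl))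
  set ν : Measure ℝ := P.map (T i) with hν
  haveI : IsProbabilityMeasure ν := Measure.isProbabilityMeasure_map (hmeas i).aemeasurable
  have hνsurv : ∀ t : ℝ, 0 ≤ t →
      ν (Set.Ioi t) = ENNReal.ofReal (Real.exp (-∫ u in (0:ℝ)..t, h i u)) := by
    intro t ht
    rw [hν, Measure.map_apply (hmeas i) measurableSet_Ioi]
    exact hsurv i t ht
  have hae : ∀ᵐ x ∂ν, 0 < x := by
    have h1 : ν (Set.Ioi 0) = 1 := by
      rw [hνsurv 0 le_rfl]
      simp [intervalIntegral.integral_same]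
    have h2 : ν (Set.Ioi 0)ᶜ = 0 := by
      rw [measure_compl measurableSet_Ioi (measure_ne_top _ _), h1, measure_univ]
      simp
    filter_upwards [measure_eq_zero_iff_ae_notMem.1 h2] with x hx
    simpa using hx
  have hjle : ∀ j, ∀ t : ℝ, 0 ≤ t → (∫ u in (0:ℝ)..t, h j u) ≤ H * t := by
    intro j t ht
    have : ∫ u in (0:ℝ)..t, h j u ≤ ∫ u in (0:ℝ)..t, H := by
      refine intervalIntegral.integral_mono_on ht (hhint j t) intervalIntegrable_const ?_
      intro x hx; exact hH j x hx.1
    simpa [mul_comm] using this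
  -- key inequality
  have key : ∫⁻ x, g x * ENNReal.ofReal (Real.exp (-((p:ℝ) * H * x))) ∂ν
      ≤ ∫⁻ ω in {ω | ∀ j, j ≠ i → T i ω < T j ω}, g (T i ω) ∂P := by
    by_cases hS : (Finset.univ.erase i : Finset (Fin (p + 1))).Nonempty
    · -- at least one other index
      set S : Finset (Fin (p + 1)) := Finset.univ.erase i with hSdef
      set U : Ω → ℝ := fun ω => S.inf' hS (fun j => T j ω) with hU
      have measU : Measurable U := meas_inf' S hS T hmeas
      have hAeq : {ω | ∀ j, j ≠ i → T i ω < T j ω} = {ω | T i ω < U ω} := by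
        ext ω
        simp only [Set.mem_setOf_eq, hU, Finset.lt_inf'_iff, hSdef, Finset.mem_erase,
          Finset.mem_univ, and_true]
      have hAmeas : MeasurableSet {ω | T i ω < U ω} := measurableSet_lt (hmeas i) measU
      -- independence of T i and U
      have hST : Disjoint ({i} : Finset (Fin (p + 1))) S := by
        simp [hSdef, Finset.disjoint_left]
      have h1 := hindep.indepFun_finset {i} S hST hmeas
      have hattach : S.attach.Nonempty := by simpa using hS
      have hψm : Measurable (fun v : (↥S → ℝ) => S.attach.inf' hattach (fun j => v j)) :=
        meas_inf' S.attach hattach (fun (j : ↥S) (v : ↥S → ℝ) => v j) (fun j => measurable_pi_apply j)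
      have hφm : Measurable (fun v : (↥({i} : Finset (Fin (p + 1))) → ℝ) =>
          v ⟨i, Finset.mem_singleton_self i⟩) := measurable_pi_apply _
      have hindepTU : IndepFun (T i) U P := by
        have h2 := h1.comp hφm hψm
        have heq : ((fun v : (↥S → ℝ) => S.attach.inf' hattach (fun j => v j)) ∘
            (fun a (j : ↥S) => T j a)) = U :=
          funext fun a => inf'_attach' S hS (fun j => T j a)
        rw [heq] at h2
        exact h2
      set ρ : Measure ℝ := P.map U with hρdef
      haveI : IsProbabilityMeasure ρ := Measure.isProbabilityMeasure_map measU.aemeasurable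
      have hpair : P.map (fun ω => (T i ω, U ω)) = ν.prod ρ :=
        (indepFun_iff_map_prod_eq_prod_map_map (hmeas i).aemeasurable measU.aemeasurable).1
          hindepTU
      have hρbound : ∀ t : ℝ, 0 ≤ t →
          ENNReal.ofReal (Real.exp (-((p:ℝ) * H * t))) ≤ ρ (Set.Ioi t) := by
        intro t ht
        have hpre : U ⁻¹' Set.Ioi t = ⋂ j ∈ S, T j ⁻¹' Set.Ioi t := by
          ext ω
          simp [hU, Finset.lt_inf'_iff]
        have hprod : P (⋂ j ∈ S, T j ⁻¹' Set.Ioi t) = ∏ j ∈ S, P (T j ⁻¹' Set.Ioi t) :=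
          hindep.meas_biInter (fun j _ => ⟨Set.Ioi t, measurableSet_Ioi, rfl⟩)
        have hcard : S.card = p := by
          simp [hSdef, Finset.card_erase_of_mem, Finset.card_univ]
        have hfac : ∀ j ∈ S, ENNReal.ofReal (Real.exp (-(H * t))) ≤ P (T j ⁻¹' Set.Ioi t) := by
          intro j _
          have : P (T j ⁻¹' Set.Ioi t) = ENNReal.ofReal (Real.exp (-∫ u in (0:ℝ)..t, h j u)) :=
            hsurv j t ht
          rw [this]
          exact ENNReal.ofReal_le_ofReal (Real.exp_le_exp.2 (by linarith [hjle j t ht]))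
        calc ENNReal.ofReal (Real.exp (-((p:ℝ) * H * t)))
            = ENNReal.ofReal (Real.exp (-(H * t))) ^ p := by
              rw [← ENNReal.ofReal_pow (Real.exp_pos _).le, ← Real.exp_nat_mul]
              congr 2
              ring
          _ = ∏ _j ∈ S, ENNReal.ofReal (Real.exp (-(H * t))) := by
              rw [Finset.prod_const, hcard]
          _ ≤ ∏ j ∈ S, P (T j ⁻¹' Set.Ioi t) := Finset.prod_le_prod' hfac
          _ = P (⋂ j ∈ S, T j ⁻¹' Set.Ioi t) := hprod.symm
          _ = ρ (Set.Ioi t) := by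
              rw [hρdef, Measure.map_apply measU measurableSet_Ioi, hpre]
      -- the two-variable function
      set F : ℝ × ℝ → ℝ≥0∞ := fun z => g z.1 * Set.indicator {q : ℝ × ℝ | q.1 < q.2} 1 z
        with hF
      have hFmeas : Measurable F := by
        apply (hg.comp measurable_fst).mul
        exact Measurable.indicator measurable_const (measurableSet_lt measurable_fst measurable_snd)
      calc ∫⁻ x, g x * ENNReal.ofReal (Real.exp (-((p:ℝ) * H * x))) ∂ν
          ≤ ∫⁻ x, g x * ρ (Set.Ioi x) ∂ν := by
            refine lintegral_mono_ae ?_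
            filter_upwards [hae] with x hx
            exact mul_le_mul_right (hρbound x hx.le) _
        _ = ∫⁻ x, ∫⁻ y, F (x, y) ∂ρ ∂ν := by
            refine lintegral_congr fun x => ?_
            have : ∀ y : ℝ, F (x, y) = g x * (Set.Ioi x).indicator 1 y := by
              intro y
              simp only [hF, Set.indicator]
              congr 1
            simp_rw [this]
            rw [lintegral_const_mul _ (measurable_one.indicator measurableSet_Ioi),
              lintegral_indicator_one measurableSet_Ioi]
        _ = ∫⁻ z, F z ∂(ν.prod ρ) := (lintegral_prod F hFmeas.aemeasurable).symm
        _ = ∫⁻ ω, F (T i ω, U ω) ∂P := by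
            rw [← hpair, lintegral_map hFmeas ((hmeas i).prodMk measU)]
        _ = ∫⁻ ω in {ω | ∀ j, j ≠ i → T i ω < T j ω}, g (T i ω) ∂P := by
            rw [hAeq, ← lintegral_indicator hAmeas]
            refine lintegral_congr fun ω => ?_
            by_cases hω : T i ω < U ω
            · rw [Set.indicator_of_mem (show ω ∈ {ω | T i ω < U ω} from hω)]
              show g (T i ω) * Set.indicator {q : ℝ × ℝ | q.1 < q.2} 1 (T i ω, U ω) = g (T i ω)
              rw [Set.indicator_of_mem (show ((T i ω, U ω) : ℝ × ℝ) ∈ {q : ℝ × ℝ | q.1 < q.2} from hω)]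
              simp
            · rw [Set.indicator_of_notMem (show ω ∉ {ω | T i ω < U ω} from hω)]
              show g (T i ω) * Set.indicator {q : ℝ × ℝ | q.1 < q.2} 1 (T i ω, U ω) = 0
              rw [Set.indicator_of_notMem (show ((T i ω, U ω) : ℝ × ℝ) ∉ {q : ℝ × ℝ | q.1 < q.2} from hω)]
              simp
    · -- no other index: the event is everything
      have hall : ∀ j : Fin (p + 1), j = i := by
        intro j
        by_contra hj
        exact hS ⟨j, Finset.mem_erase.2 ⟨hj, Finset.mem_univ j⟩⟩
      have hAeq : {ω : Ω | ∀ j, j ≠ i → T i ω < T j ω} = Set.univ := by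
        ext ω
        simp only [Set.mem_setOf_eq, Set.mem_univ, iff_true]
        intro j hj
        exact absurd (hall j) hj
      rw [hAeq, Measure.restrict_univ, ← lintegral_map hg (hmeas i), ← hν]
      refine lintegral_mono_ae ?_
      filter_upwards [hae] with x hx
      calc g x * ENNReal.ofReal (Real.exp (-((p:ℝ) * H * x)))
          ≤ g x * 1 := by
            refine mul_le_mul_right ?_ _
            refine ENNReal.ofReal_le_one.2 (Real.exp_le_one_iff.2 ?_)
            have : 0 ≤ (p:ℝ) * H * x := by positivity
            linarith
        _ = g x := mul_one _
  -- final assembly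
  have core := core_density ν (h i) H hmin hminpos (hhint i) hνsurv (hH i) hlow
    (fun x => g x * ENNReal.ofReal (Real.exp (-((p:ℝ) * H * x))))
    (hg.mul (((measurable_id.const_mul ((p:ℝ) * H)).neg.exp).ennreal_ofReal))
  refine le_trans (le_of_eq ?_) (core.trans key)
  rw [← lintegral_const_mul' _ _ ofReal_ne_top]
  refine setLIntegral_congr_fun measurableSet_Ioi (fun t ht => ?_)
  have hexp : Real.exp (-((p:ℝ) + 1) * H * t)
      = Real.exp (-((p:ℝ) * H * t)) * Real.exp (-(H * t)) := by
    rw [← Real.exp_add]; ring_nf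
  rw [hexp, ENNReal.ofReal_mul (Real.exp_pos _).le,
    ENNReal.ofReal_mul hminpos.le]
  ring
end
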